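/- arXiv:1210.0271 — 2 statements merged into one kernel-verified Lean document; each statement's English description precedes it below -/
import Mathlib

section
/- Cardinality bound for conditionally typical sets: fix a joint pmf p_{AB} on a finite product alphabet 𝒜 × ℬ and 0 ≤ δ1 < δ2 ≤ min over the support of p_{AB}. If a ∈ 𝒜ⁿ is δ1-typical for p_A, then the number of sequences b ∈ ℬⁿ such that (a,b) is δ2-jointly typical is at most 2^{n H(B|A)(1+δ2)}. -/
open Finset Real
open scoped BigOperators Classical

/-- `-x log₂ x`, with the convention that it is `0` at `x = 0`. -/
noncomputable def negMulLog2 (x : ℝ) : ℝ := -x * Real.logb 2 x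

/-- Binary entropy function `h(p) = -p log₂ p - (1-p) log₂ (1-p)`. -/
noncomputable def binEnt (p : ℝ) : ℝ := negMulLog2 p + negMulLog2 (1 - p)

/-- `μ` is a probability mass function on the finite type `Ω`. -/
def IsPMF {Ω : Type*} [Fintype Ω] (μ : Ω → ℝ) : Prop :=
  (∀ ω, 0 ≤ μ ω) ∧ ∑ ω, μ ω = 1

/-- Probability that the random variable `X` takes the value `a`. -/
noncomputable def prob {Ω : Type*} [Fintype Ω] (μ : Ω → ℝ) {A : Type*} (X : Ω → A) (a : A) : ℝ :=
  ∑ ω, if X ω = a then μ ω else 0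

/-- Probability of an event. -/
noncomputable def prEvent {Ω : Type*} [Fintype Ω] (μ : Ω → ℝ) (E : Ω → Prop) : ℝ :=
  ∑ ω, if E ω then μ ω else 0

/-- Shannon entropy (in bits) of a random variable. -/
noncomputable def entropy {Ω : Type*} [Fintype Ω] (μ : Ω → ℝ) {A : Type*} [Fintype A]
    (X : Ω → A) : ℝ :=
  ∑ a, negMulLog2 (prob μ X a)

/-- Conditional entropy `H(X|Y) = H(X,Y) - H(Y)` (in bits). -/
noncomputable def condEntropy {Ω : Type*} [Fintype Ω] (μ : Ω → ℝ) {A B : Type*}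
    [Fintype A] [Fintype B] (X : Ω → A) (Y : Ω → B) : ℝ :=
  entropy μ (fun ω => (X ω, Y ω)) - entropy μ Y

/-- Mutual information `I(X;Y) = H(X) + H(Y) - H(X,Y)` (in bits). -/
noncomputable def mutualInfo {Ω : Type*} [Fintype Ω] (μ : Ω → ℝ) {A B : Type*}
    [Fintype A] [Fintype B] (X : Ω → A) (Y : Ω → B) : ℝ :=
  entropy μ X + entropy μ Y - entropy μ (fun ω => (X ω, Y ω))

/-- Conditional mutual information `I(X;Y|Z) = H(X|Z) - H(X|Y,Z)` (in bits). -/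
noncomputable def condMutualInfo {Ω : Type*} [Fintype Ω] (μ : Ω → ℝ) {A B C : Type*}
    [Fintype A] [Fintype B] [Fintype C] (X : Ω → A) (Y : Ω → B) (Z : Ω → C) : ℝ :=
  condEntropy μ X Z - condEntropy μ X (fun ω => (Y ω, Z ω))

/-- `X` and `Z` are conditionally independent given `Y` (the Markov chain `X — Y — Z`). -/
def CondIndep {Ω : Type*} [Fintype Ω] (μ : Ω → ℝ) {A B C : Type*}
    (X : Ω → A) (Z : Ω → C) (Y : Ω → B) : Prop :=
  ∀ a c b, prob μ (fun ω => (X ω, Z ω, Y ω)) (a, c, b) * prob μ Y b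
    = prob μ (fun ω => (X ω, Y ω)) (a, b) * prob μ (fun ω => (Z ω, Y ω)) (c, b)

/-- Empirical frequency (type) of the symbol `a'` in the sequence `a`. -/
noncomputable def empFreq {n : ℕ} {A : Type*} (a : Fin n → A) (a' : A) : ℝ :=
  ((Finset.univ.filter (fun i => a i = a')).card : ℝ) / n

/-- `a` is `δ`-typical for the pmf `p` (relative-deviation definition). -/
def Typical {n : ℕ} {A : Type*} (p : A → ℝ) (δ : ℝ) (a : Fin n → A) : Prop :=
  ∀ a', |empFreq a a' - p a'| ≤ δ * p a'

/-- `(a, b)` is `δ`-jointly typical for the joint pmf `p` on `A × B`. -/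
def JointTypical {n : ℕ} {A B : Type*} (p : A × B → ℝ) (δ : ℝ)
    (a : Fin n → A) (b : Fin n → B) : Prop :=
  ∀ a' b', |empFreq (fun i => (a i, b i)) (a', b') - p (a', b')| ≤ δ * p (a', b')

/-- Entropy (in bits) of a pmf on a finite type. -/
noncomputable def pmfEntropy {T : Type*} [Fintype T] (p : T → ℝ) : ℝ :=
  ∑ t, negMulLog2 (p t)

/-- `A`-marginal of a joint pmf on `A × B`. -/
noncomputable def margA {A B : Type*} [Fintype B] (p : A × B → ℝ) (a : A) : ℝ := ∑ b, p (a, b)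

/-- `B`-marginal of a joint pmf on `A × B`. -/
noncomputable def margB {A B : Type*} [Fintype A] (p : A × B → ℝ) (b : B) : ℝ := ∑ a, p (a, b)

/-- Conditional entropy `H(B|A)` (in bits) of a joint pmf on `A × B`. -/
noncomputable def pmfCondEntropyBA {A B : Type*} [Fintype A] [Fintype B] (p : A × B → ℝ) : ℝ :=
  pmfEntropy p - pmfEntropy (margA p)

/-- Mutual information `I(A;B)` (in bits) of a joint pmf on `A × B`. -/
noncomputable def pmfMutualInfo {A B : Type*} [Fintype A] [Fintype B] (p : A × B → ℝ) : ℝ :=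
  pmfEntropy (margA p) + pmfEntropy (margB p) - pmfEntropy p

lemma sum_fiber {n : ℕ} {T : Type*} [Fintype T] (c : Fin n → T) (g : T → ℝ) :
    ∑ i, g (c i) = ∑ t, ((Finset.univ.filter (fun i => c i = t)).card : ℝ) * g t := by
  have h : ∀ t, ((Finset.univ.filter (fun i => c i = t)).card : ℝ) * g t
      = ∑ i : Fin n, if c i = t then g t else 0 := by
    intro t
    rw [Finset.sum_ite, Finset.sum_const, Finset.sum_const]
    simp [mul_comm]
  simp_rw [h]
  rw [Finset.sum_comm]
  congr 1; ext i
  simp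

lemma sum_fiber' {n : ℕ} {T : Type*} [Fintype T] (c : Fin n → T) (g : T → ℝ) :
    ∑ i, g (c i) = ∑ t, ((n : ℝ) * empFreq c t) * g t := by
  rcases Nat.eq_zero_or_pos n with hn | hn
  · subst hn; simp
  · have hn' : ((n : ℝ)) ≠ 0 := by positivity
    rw [sum_fiber c g]
    congr 1; ext t
    unfold empFreq
    field_simp

/-- Cardinality bound for conditionally typical sets: if `a` is `δ1`-typical for `p_A`, then the
number of sequences `b` with `(a,b)` `δ2`-jointly typical is at most `2^{n H(B|A)(1+δ2)}`. -/
theorem stmt7 {A B : Type*} [Fintype A] [Fintype B] (p : A × B → ℝ) (hp : IsPMF p)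
    (δ1 δ2 : ℝ) (h0 : 0 ≤ δ1) (h12 : δ1 < δ2)
    (hmin : ∀ ab : A × B, 0 < p ab → δ2 ≤ p ab)
    (n : ℕ) (a : Fin n → A) (ha : Typical (margA p) δ1 a) :
    ((Finset.univ.filter (fun b : Fin n → B => JointTypical p δ2 a b)).card : ℝ)
      ≤ (2 : ℝ) ^ ((n : ℝ) * pmfCondEntropyBA p * (1 + δ2)) := by
  classical
  set E : ℝ := (n : ℝ) * pmfCondEntropyBA p * (1 + δ2) with hE
  set T := Finset.univ.filter (fun b : Fin n → B => JointTypical p δ2 a b) with hTdef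
  have hEpos : (0:ℝ) < (2:ℝ) ^ E := Real.rpow_pos_of_pos two_pos _
  rcases T.eq_empty_or_nonempty with hTe | ⟨b₀, hb₀⟩
  · rw [hTe]; simpa using hEpos.le
  have hpnn := hp.1
  have hδ2 : 0 < δ2 := lt_of_le_of_lt h0 h12
  -- positivity of p at observed pairs
  have key : ∀ b ∈ T, ∀ i, 0 < p (a i, b i) := by
    intro b hb i
    have hjt : JointTypical p δ2 a b := (Finset.mem_filter.mp hb).2
    rcases lt_or_eq_of_le (hpnn (a i, b i)) with h | h
    · exact h
    · exfalso
      have hts := hjt (a i) (b i)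
      rw [← h] at hts
      simp only [mul_zero, sub_zero] at hts
      have hf0 : empFreq (fun i => (a i, b i)) (a i, b i) = 0 :=
        abs_eq_zero.mp (le_antisymm hts (abs_nonneg _))
      have hn : 0 < n := i.pos
      have hn' : (0:ℝ) < n := by exact_mod_cast hn
      have : 0 < empFreq (fun i => (a i, b i)) (a i, b i) := by
        unfold empFreq
        apply div_pos _ hn'
        exact_mod_cast Finset.card_pos.mpr ⟨i, by simp⟩
      linarith [this, hf0.le]
  have hApos : ∀ i, 0 < margA p (a i) := by
    intro i
    have h1 : p (a i, b₀ i) ≤ margA p (a i) :=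
      Finset.single_le_sum (fun y _ => hpnn (a i, y)) (Finset.mem_univ (b₀ i))
    exact lt_of_lt_of_le (key b₀ hb₀ i) h1
  set f : Fin n → B → ℝ := fun i y => p (a i, y) / margA p (a i) with hf
  have hfnn : ∀ i y, 0 ≤ f i y := fun i y => div_nonneg (hpnn _) (hApos i).le
  have htot : ∑ b : Fin n → B, ∏ i, f i (b i) = 1 := by
    rw [← Fintype.prod_sum f]
    apply Finset.prod_eq_one
    intro i _
    rw [← Finset.sum_div]
    exact div_self (hApos i).ne'
  set g : A × B → ℝ := fun t => Real.logb 2 (p t) - Real.logb 2 (margA p t.1) with hg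
  have hgle : ∀ t, 0 < p t → g t ≤ 0 := by
    intro t hpt
    have h1 : p t ≤ margA p t.1 := by
      have h2 : p (t.1, t.2) ≤ margA p t.1 :=
        Finset.single_le_sum (fun y _ => hpnn (t.1, y)) (Finset.mem_univ t.2)
      simpa using h2
    have h3 := Real.logb_le_logb_of_le (by norm_num : (1:ℝ) < 2) hpt h1
    simp only [hg, sub_nonpos]
    exact h3
  -- ∑ p t * g t = - H(B|A)
  have hHG : ∑ t : A × B, p t * g t = - pmfCondEntropyBA p := by
    simp only [hg, mul_sub]
    rw [Finset.sum_sub_distrib]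
    have h2 : ∑ t : A × B, p t * Real.logb 2 (margA p t.1)
        = ∑ a' : A, margA p a' * Real.logb 2 (margA p a') := by
      rw [Fintype.sum_prod_type]
      apply Finset.sum_congr rfl
      intro a' _
      simp only
      rw [← Finset.sum_mul]
      rfl
    rw [h2]
    have e1 : pmfEntropy p = -∑ t : A × B, p t * Real.logb 2 (p t) := by
      simp [pmfEntropy, negMulLog2, neg_mul]
    have e2 : pmfEntropy (margA p) = -∑ a' : A, margA p a' * Real.logb 2 (margA p a') := by
      simp [pmfEntropy, negMulLog2, neg_mul]
    rw [pmfCondEntropyBA, e1, e2]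
    ring
  -- per-b lower bound
  have hper : ∀ b ∈ T, (2:ℝ) ^ (-E) ≤ ∏ i, f i (b i) := by
    intro b hb
    have hjt : JointTypical p δ2 a b := (Finset.mem_filter.mp hb).2
    have hfpos : ∀ i, 0 < f i (b i) := fun i => div_pos (key b hb i) (hApos i)
    have hprod : ∏ i, f i (b i) = (2:ℝ) ^ (∑ i, Real.logb 2 (f i (b i))) := by
      rw [Real.rpow_sum_of_pos two_pos]
      apply Finset.prod_congr rfl
      intro i _
      rw [Real.rpow_logb two_pos (by norm_num) (hfpos i)]
    have hlogf : ∀ i, Real.logb 2 (f i (b i)) = g (a i, b i) := by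
      intro i
      simp only [hf, hg]
      rw [Real.logb_div (key b hb i).ne' (hApos i).ne']
    set N : A × B → ℝ := fun t => (n : ℝ) * empFreq (fun i => (a i, b i)) t with hN
    have hNle : ∀ t : A × B, N t * g t ≥ (1 + δ2) * n * (p t * g t) := by
      intro t
      rcases lt_or_eq_of_le (hpnn t) with hpt | hpt
      · have hts := hjt t.1 t.2
        have habs := (abs_le.mp (by simpa using hts)).2
        have hfb : empFreq (fun i => (a i, b i)) t ≤ (1 + δ2) * p t := by linarith
        have hfnn' : 0 ≤ empFreq (fun i => (a i, b i)) t := by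
          unfold empFreq; positivity
        have hgt := hgle t hpt
        have hnn : (0:ℝ) ≤ n := Nat.cast_nonneg n
        have hNb : N t ≤ (1 + δ2) * n * p t := by
          rw [hN]
          calc (n:ℝ) * empFreq (fun i => (a i, b i)) t
              ≤ (n:ℝ) * ((1 + δ2) * p t) := mul_le_mul_of_nonneg_left hfb hnn
            _ = (1 + δ2) * n * p t := by ring
        nlinarith [hNb, hgt]
      · have hts := hjt t.1 t.2
        rw [← hpt] at hts
        simp only [mul_zero, sub_zero] at hts
        have hf0 : empFreq (fun i => (a i, b i)) t = 0 := by
          simpa using hts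
        rw [hN, ← hpt]
        simp [hf0]
    have hsum : -E ≤ ∑ i, g (a i, b i) := by
      have h1 : ∑ i, g (a i, b i) = ∑ t : A × B, N t * g t := by
        rw [sum_fiber' (fun i => (a i, b i)) g]
      have h2 : ∑ t : A × B, (1 + δ2) * (n:ℝ) * (p t * g t) ≤ ∑ t : A × B, N t * g t :=
        Finset.sum_le_sum (fun t _ => hNle t)
      have h3 : ∑ t : A × B, (1 + δ2) * (n:ℝ) * (p t * g t)
          = (1 + δ2) * n * ∑ t, p t * g t := by rw [← Finset.mul_sum]
      rw [h1]
      rw [h3, hHG] at h2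
      calc -E = (1 + δ2) * n * -pmfCondEntropyBA p := by rw [hE]; ring
        _ ≤ ∑ t : A × B, N t * g t := h2
    rw [hprod]
    apply (Real.rpow_le_rpow_left_iff (by norm_num : (1:ℝ) < 2)).mpr
    simp_rw [hlogf]
    exact hsum
  -- combine
  have hcount : (T.card : ℝ) * (2:ℝ) ^ (-E) ≤ 1 := by
    calc (T.card : ℝ) * (2:ℝ) ^ (-E) = ∑ _b ∈ T, (2:ℝ) ^ (-E) := by
          rw [Finset.sum_const, nsmul_eq_mul]
      _ ≤ ∑ b ∈ T, ∏ i, f i (b i) := Finset.sum_le_sum (fun b hb => hper b hb)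
      _ ≤ ∑ b : Fin n → B, ∏ i, f i (b i) := by
          apply Finset.sum_le_sum_of_subset_of_nonneg (Finset.subset_univ T)
          intro b _ _
          exact Finset.prod_nonneg (fun i _ => hfnn i (b i))
      _ = 1 := htot
  have h2E : (T.card : ℝ) = (T.card : ℝ) * (2:ℝ) ^ (-E) * (2:ℝ) ^ E := by
    rw [mul_assoc, ← Real.rpow_add two_pos]
    simp
  calc (T.card : ℝ) = (T.card : ℝ) * (2:ℝ) ^ (-E) * (2:ℝ) ^ E := h2E
    _ ≤ 1 * (2:ℝ) ^ E := mul_le_mul_of_nonneg_right hcount hEpos.le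
    _ = (2:ℝ) ^ E := one_mul _
end

section
/- Probability bound for conditionally typical sets under an independent draw: with the setup above, if a ∈ 𝒜ⁿ is δ1-typical for p_A and B = (B_1,...,B_n) is drawn i.i.d. from the marginal p_B, then P[(a, B) is δ2-jointly typical] ≤ 2^{-n(I(A;B) - 2δ2 H(B))}. -/
open Finset Real
open scoped BigOperators Classical

lemma sum_mul_ite_le_mul_sum {ι : Type*} [Fintype ι] {P Q : ι → ℝ} {S : ι → Prop}
    [DecidablePred S] {c : ℝ} (hc : 0 ≤ c) (hQ : ∀ i, 0 ≤ Q i) (hPQ : ∀ i, S i → P i ≤ c * Q i) :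
    ∑ i, P i * (if S i then 1 else 0) ≤ c * ∑ i, Q i := by
  rw [mul_sum]
  refine sum_le_sum fun i _ => ?_
  split_ifs with h
  · simpa using hPQ i h
  · simpa using mul_nonneg hc (hQ i)

lemma sum_mul_logb_div_nonpos {ι : Type*} [Fintype ι] {P Q : ι → ℝ} (hP : ∀ i, 0 ≤ P i)
    (hQ : ∀ i, 0 ≤ Q i) (hsupp : ∀ i, 0 < P i → 0 < Q i) (hsum : ∑ i, Q i ≤ ∑ i, P i) :
    ∑ i, P i * logb 2 (Q i / P i) ≤ 0 := by
  have hterm : ∀ i, P i * log (Q i / P i) ≤ Q i - P i := fun i => by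
    rcases (hP i).eq_or_lt with h | h
    · simpa [← h] using hQ i
    · calc P i * log (Q i / P i) ≤ P i * (Q i / P i - 1) :=
            mul_le_mul_of_nonneg_left (log_le_sub_one_of_pos (div_pos (hsupp i h) h)) h.le
        _ = Q i - P i := by field_simp
  simp only [logb, mul_div_assoc', ← sum_div]
  refine div_nonpos_of_nonpos_of_nonneg ?_ (log_nonneg one_le_two)
  linarith [sum_le_sum fun i (_ : i ∈ univ) => hterm i, sum_sub_distrib (s := univ) Q P]

lemma sum_mul_logb_self {T : Type*} [Fintype T] (q : T → ℝ) :
    ∑ t, q t * logb 2 (q t) = -pmfEntropy q := by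
  simp [pmfEntropy, negMulLog2, sum_neg_distrib]

section EmpiricalFrequency

variable {n : ℕ} {T : Type*}

lemma card_filter_eq_mul_empFreq (x : Fin n → T) (t : T) :
    ((univ.filter fun i => x i = t).card : ℝ) = n * empFreq x t := by
  rcases Nat.eq_zero_or_pos n with rfl | hn
  · simp
  · rw [empFreq, mul_div_cancel₀ _ (by positivity)]

lemma sum_comp_eq_mul_sum_empFreq [Fintype T] (x : Fin n → T) (g : T → ℝ) :
    ∑ i, g (x i) = n * ∑ t, empFreq x t * g t := by
  rw [← sum_fiberwise univ x (fun i => g (x i)), mul_sum]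
  refine sum_congr rfl fun t _ => ?_
  rw [sum_congr rfl fun i hi => by rw [(mem_filter.mp hi).2], sum_const, nsmul_eq_mul,
    card_filter_eq_mul_empFreq, mul_assoc]

lemma empFreq_apply_pos (x : Fin n → T) (i : Fin n) : 0 < empFreq x (x i) := by
  have hn : (0 : ℝ) < n := by exact_mod_cast i.pos
  exact div_pos (by exact_mod_cast card_pos.mpr ⟨i, by simp⟩) hn

lemma empFreq_snd_eq_sum {A : Type*} [Fintype A] (a : Fin n → A) (b : Fin n → T) (t : T) :
    empFreq b t = ∑ a', empFreq (fun i => (a i, b i)) (a', t) := by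
  have hfiber : ∀ a', (univ.filter fun i => b i = t).filter (fun i => a i = a')
      = univ.filter fun i => (a i, b i) = (a', t) := fun a' => by
    ext i
    simp [Prod.ext_iff, and_comm]
  simp only [empFreq, ← sum_div, card_eq_sum_card_fiberwise (f := a) (t := univ)
    (s := univ.filter fun i => b i = t) (fun _ _ => mem_univ _), hfiber, Nat.cast_sum]

lemma prod_comp_eq_two_rpow [Fintype T] (x : Fin n → T) {f : T → ℝ} (hf : ∀ i, 0 < f (x i)) :
    ∏ i, f (x i) = (2 : ℝ) ^ (n * ∑ t, empFreq x t * logb 2 (f t)) := by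
  rw [← sum_comp_eq_mul_sum_empFreq x, rpow_sum_of_pos two_pos]
  exact prod_congr rfl fun i _ => (rpow_logb two_pos (by norm_num) (hf i)).symm

lemma prod_comp_le_two_rpow [Fintype T] (x : Fin n → T) {f w : T → ℝ} (hf0 : ∀ t, 0 ≤ f t)
    (hf1 : ∀ t, f t ≤ 1) (hw : ∀ t, w t ≤ empFreq x t) :
    ∏ i, f (x i) ≤ (2 : ℝ) ^ (n * ∑ t, w t * logb 2 (f t)) := by
  by_cases hpos : ∀ i, 0 < f (x i)
  · rw [prod_comp_eq_two_rpow x hpos]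
    refine rpow_le_rpow_of_exponent_le one_le_two
      (mul_le_mul_of_nonneg_left (sum_le_sum fun t _ => ?_) n.cast_nonneg)
    exact mul_le_mul_of_nonpos_right (hw t) (logb_nonpos one_lt_two (hf0 t) (hf1 t))
  · push Not at hpos
    obtain ⟨i, hi⟩ := hpos
    rw [prod_eq_zero (mem_univ i) (le_antisymm hi (hf0 _))]
    positivity

lemma two_rpow_le_prod_comp [Fintype T] (x : Fin n → T) {f w : T → ℝ} (hf0 : ∀ t, 0 ≤ f t)
    (hf1 : ∀ t, f t ≤ 1) (hpos : ∀ i, 0 < f (x i)) (hw : ∀ t, empFreq x t ≤ w t) :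
    (2 : ℝ) ^ (n * ∑ t, w t * logb 2 (f t)) ≤ ∏ i, f (x i) := by
  rw [prod_comp_eq_two_rpow x hpos]
  refine rpow_le_rpow_of_exponent_le one_le_two
    (mul_le_mul_of_nonneg_left (sum_le_sum fun t _ => ?_) n.cast_nonneg)
  exact mul_le_mul_of_nonpos_right (hw t) (logb_nonpos one_lt_two (hf0 t) (hf1 t))

end EmpiricalFrequency

section Typicality

variable {n : ℕ} {T : Type*} {p : T → ℝ} {δ : ℝ} {x : Fin n → T}

lemma Typical.le_empFreq (hx : Typical p δ x) (t : T) : (1 - δ) * p t ≤ empFreq x t := by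
  linarith [(abs_le.mp (hx t)).1]

lemma Typical.empFreq_le (hx : Typical p δ x) (t : T) : empFreq x t ≤ (1 + δ) * p t := by
  linarith [(abs_le.mp (hx t)).2]

lemma Typical.pos_apply (hx : Typical p δ x) (hp : ∀ t, 0 ≤ p t) (i : Fin n) : 0 < p (x i) := by
  refine (hp _).lt_of_ne fun h => ?_
  have := hx (x i)
  rw [← h, mul_zero, sub_zero, abs_nonpos_iff] at this
  exact (empFreq_apply_pos x i).ne' this

variable {A B : Type*} {p : A × B → ℝ} {a : Fin n → A} {b : Fin n → B}

lemma JointTypical.typical (h : JointTypical p δ a b) : Typical p δ fun i => (a i, b i) :=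
  fun ab => h ab.1 ab.2

lemma JointTypical.typical_margB [Fintype A] [Fintype B] (h : JointTypical p δ a b) :
    Typical (margB p) δ b := fun t => by
  rw [empFreq_snd_eq_sum a, margB, ← sum_sub_distrib, mul_sum]
  exact (abs_sum_le_sum_abs _ _).trans (sum_le_sum fun a' _ => h a' t)

lemma JointTypical.nonneg [Fintype A] [Fintype B] (hp : IsPMF p) (h : JointTypical p δ a b) :
    0 ≤ δ := by
  obtain ⟨ab, -, hab⟩ : ∃ ab ∈ univ, (0 : ℝ) < p ab :=
    exists_lt_of_sum_lt (by simp [hp.2])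
  exact nonneg_of_mul_nonneg_left ((abs_nonneg _).trans (h ab.1 ab.2)) hab

end Typicality

section JointPMF

variable {A B : Type*} {p : A × B → ℝ}

lemma margA_nonneg [Fintype B] (hp : ∀ ab, 0 ≤ p ab) (a : A) : 0 ≤ margA p a :=
  sum_nonneg fun b _ => hp (a, b)

lemma margB_nonneg [Fintype A] (hp : ∀ ab, 0 ≤ p ab) (b : B) : 0 ≤ margB p b :=
  sum_nonneg fun a _ => hp (a, b)

lemma le_margA [Fintype B] (hp : ∀ ab, 0 ≤ p ab) (ab : A × B) : p ab ≤ margA p ab.1 :=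
  single_le_sum (f := fun b => p (ab.1, b)) (fun _ _ => hp _) (mem_univ ab.2)

lemma le_margB [Fintype A] (hp : ∀ ab, 0 ≤ p ab) (ab : A × B) : p ab ≤ margB p ab.2 :=
  single_le_sum (f := fun a => p (a, ab.2)) (fun _ _ => hp _) (mem_univ ab.1)

lemma sum_margA [Fintype A] [Fintype B] (p : A × B → ℝ) : ∑ a, margA p a = ∑ ab, p ab :=
  (Fintype.sum_prod_type p).symm

lemma sum_margB [Fintype A] [Fintype B] (p : A × B → ℝ) : ∑ b, margB p b = ∑ ab, p ab :=
  (Fintype.sum_prod_type_right p).symm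

lemma margB_le_one [Fintype A] [Fintype B] (hp : IsPMF p) (b : B) : margB p b ≤ 1 := by
  rw [← hp.2, ← sum_margB]
  exact single_le_sum (fun b _ => margB_nonneg hp.1 b) (mem_univ b)

lemma sum_mul_comp_fst [Fintype A] [Fintype B] (p : A × B → ℝ) (f : A → ℝ) :
    ∑ ab, p ab * f ab.1 = ∑ a, margA p a * f a := by
  rw [Fintype.sum_prod_type]
  exact sum_congr rfl fun a _ => by rw [margA, sum_mul]

lemma sum_mul_comp_snd [Fintype A] [Fintype B] (p : A × B → ℝ) (f : B → ℝ) :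
    ∑ ab, p ab * f ab.2 = ∑ b, margB p b * f b := by
  rw [Fintype.sum_prod_type_right]
  exact sum_congr rfl fun b _ => by rw [margB, sum_mul]

lemma pmfMutualInfo_eq_neg_sum [Fintype A] [Fintype B] (hp : ∀ ab, 0 ≤ p ab) :
    pmfMutualInfo p = -∑ ab, p ab * logb 2 (margA p ab.1 * margB p ab.2 / p ab) := by
  have hterm : ∀ ab, p ab * logb 2 (margA p ab.1 * margB p ab.2 / p ab)
      = p ab * logb 2 (margA p ab.1) + p ab * logb 2 (margB p ab.2)
        - p ab * logb 2 (p ab) := fun ab => by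
    rcases (hp ab).eq_or_lt with h | h
    · simp [← h]
    · have hA := h.trans_le (le_margA hp ab)
      have hB := h.trans_le (le_margB hp ab)
      rw [logb_div (mul_pos hA hB).ne' h.ne', logb_mul hA.ne' hB.ne']
      ring
  simp only [hterm, sum_sub_distrib, sum_add_distrib,
    sum_mul_comp_fst p fun a => logb 2 (margA p a),
    sum_mul_comp_snd p fun b => logb 2 (margB p b), pmfMutualInfo, sum_mul_logb_self]
  ring

lemma pmfMutualInfo_nonneg [Fintype A] [Fintype B] (hp : IsPMF p) : 0 ≤ pmfMutualInfo p := by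
  rw [pmfMutualInfo_eq_neg_sum hp.1, neg_nonneg]
  refine sum_mul_logb_div_nonpos hp.1
    (fun ab => mul_nonneg (margA_nonneg hp.1 _) (margB_nonneg hp.1 _))
    (fun ab h => mul_pos (h.trans_le (le_margA hp.1 ab)) (h.trans_le (le_margB hp.1 ab))) ?_
  rw [Fintype.sum_prod_type, ← sum_mul_sum, sum_margA, sum_margB, hp.2, one_mul]

/-- `p(b | a)`, which is `0` when `p_A(a) = 0`. -/
noncomputable def condPmf [Fintype B] (p : A × B → ℝ) (ab : A × B) : ℝ := p ab / margA p ab.1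

lemma condPmf_nonneg [Fintype B] (hp : ∀ ab, 0 ≤ p ab) (ab : A × B) : 0 ≤ condPmf p ab :=
  div_nonneg (hp ab) (margA_nonneg hp _)

lemma condPmf_le_one [Fintype B] (hp : ∀ ab, 0 ≤ p ab) (ab : A × B) : condPmf p ab ≤ 1 :=
  div_le_one_of_le₀ (le_margA hp ab) (margA_nonneg hp _)

lemma condPmf_pos [Fintype B] (hp : ∀ ab, 0 ≤ p ab) {ab : A × B} (h : 0 < p ab) :
    0 < condPmf p ab :=
  div_pos h (h.trans_le (le_margA hp ab))

lemma sum_condPmf [Fintype B] {a : A} (ha : margA p a ≠ 0) : ∑ b, condPmf p (a, b) = 1 := by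
  change ∑ b, p (a, b) / margA p a = 1
  rw [← sum_div]
  exact div_self ha

lemma sum_mul_logb_condPmf [Fintype A] [Fintype B] (hp : ∀ ab, 0 ≤ p ab) :
    ∑ ab, p ab * logb 2 (condPmf p ab) = -pmfCondEntropyBA p := by
  have hterm : ∀ ab, p ab * logb 2 (condPmf p ab)
      = p ab * logb 2 (p ab) - p ab * logb 2 (margA p ab.1) := fun ab => by
    rcases (hp ab).eq_or_lt with h | h
    · simp [← h]
    · rw [condPmf, logb_div h.ne' (h.trans_le (le_margA hp ab)).ne', mul_sub]
  simp only [hterm, sum_sub_distrib, sum_mul_comp_fst p fun a => logb 2 (margA p a),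
    pmfCondEntropyBA, sum_mul_logb_self]
  ring

lemma sum_prod_condPmf [Fintype B] {n : ℕ} {a : Fin n → A} (ha : ∀ i, margA p (a i) ≠ 0) :
    ∑ b : Fin n → B, ∏ i, condPmf p (a i, b i) = 1 := by
  rw [← Fintype.prod_sum fun i b' => condPmf p (a i, b')]
  simp [sum_condPmf (ha _)]

end JointPMF

lemma JointTypical.prod_margB_le {A B : Type*} [Fintype A] [Fintype B] {p : A × B → ℝ} {δ : ℝ}
    {n : ℕ} {a : Fin n → A} {b : Fin n → B} (hp : IsPMF p) (h : JointTypical p δ a b) :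
    ∏ i, margB p (b i) ≤ (2 : ℝ) ^ (-(n : ℝ) * (pmfMutualInfo p - 2 * δ * pmfEntropy (margB p)))
      * ∏ i, condPmf p (a i, b i) := by
  have upper := prod_comp_le_two_rpow b (margB_nonneg hp.1) (margB_le_one hp)
    h.typical_margB.le_empFreq
  have lower := two_rpow_le_prod_comp (fun i => (a i, b i)) (condPmf_nonneg hp.1)
    (condPmf_le_one hp.1) (fun i => condPmf_pos hp.1 (h.typical.pos_apply hp.1 i))
    h.typical.empFreq_le
  simp only [mul_assoc, ← mul_sum, sum_mul_logb_self, sum_mul_logb_condPmf hp.1] at upper lower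
  -- the two exponents differ by `n δ I(A;B)`
  have hI := mul_nonneg (mul_nonneg n.cast_nonneg (h.nonneg hp)) (pmfMutualInfo_nonneg hp)
  calc _ ≤ _ := upper
    _ ≤ (2 : ℝ) ^ (-(n : ℝ) * (pmfMutualInfo p - 2 * δ * pmfEntropy (margB p))
          + n * ((1 + δ) * -pmfCondEntropyBA p)) := by
        refine rpow_le_rpow_of_exponent_le one_le_two ?_
        simp only [pmfMutualInfo, pmfCondEntropyBA] at hI ⊢
        linarith
    _ = _ := rpow_add two_pos _ _
    _ ≤ _ := mul_le_mul_of_nonneg_left lower (by positivity)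

theorem stmt8_general {A B : Type*} [Fintype A] [Fintype B] (p : A × B → ℝ) (hp : IsPMF p)
    (δ1 δ2 : ℝ) (n : ℕ) (a : Fin n → A) (ha : Typical (margA p) δ1 a) :
    (∑ b : Fin n → B, (∏ i, margB p (b i)) * (if JointTypical p δ2 a b then 1 else 0))
      ≤ (2 : ℝ) ^ (-(n : ℝ) * (pmfMutualInfo p - 2 * δ2 * pmfEntropy (margB p))) := by
  have hmargA : ∀ i, margA p (a i) ≠ 0 := fun i => (ha.pos_apply (margA_nonneg hp.1) i).ne'
  calc _ ≤ _ * ∑ b : Fin n → B, ∏ i, condPmf p (a i, b i) :=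
        sum_mul_ite_le_mul_sum (by positivity)
          (fun b => prod_nonneg fun i _ => condPmf_nonneg hp.1 _) fun b hb => hb.prod_margB_le hp
    _ = _ := by rw [sum_prod_condPmf hmargA, mul_one]

/-- Probability bound for conditionally typical sets under an independent draw: if `a` is
`δ1`-typical for `p_A` and `B` is drawn i.i.d. from the marginal `p_B`, then
`P[(a,B) δ2-jointly typical] ≤ 2^{-n(I(A;B) - 2 δ2 H(B))}`. -/
theorem stmt8 {A B : Type*} [Fintype A] [Fintype B] (p : A × B → ℝ) (hp : IsPMF p)
    (δ1 δ2 : ℝ) (h0 : 0 ≤ δ1) (h12 : δ1 < δ2)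
    (hmin : ∀ ab : A × B, 0 < p ab → δ2 ≤ p ab)
    (n : ℕ) (a : Fin n → A) (ha : Typical (margA p) δ1 a) :
    (∑ b : Fin n → B, (∏ i, margB p (b i)) * (if JointTypical p δ2 a b then 1 else 0))
      ≤ (2 : ℝ) ^ (-(n : ℝ) * (pmfMutualInfo p - 2 * δ2 * pmfEntropy (margB p))) :=
  stmt8_general p hp δ1 δ2 n a ha
end
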